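/- arXiv:1608.02921 — 5 statements merged into one kernel-verified Lean document; each statement's English description precedes it below -/
import Mathlib

section
/- For all integers l ≥ 2 and m ≥ 2, the polynomial F_{l,m} = (y^{l-1}·z − x^l)^m − x^{l·m−1}·y in ℂ[x,y,z] is homogeneous of degree l·m and is irreducible in ℂ[x,y,z]. -/
/-!
Regard `F_{l,m}` as a polynomial in `z` over the UFD `ℂ[x,y]`: it is `(A z - B)^m - D` with
`A = y^(l-1)`, `B = x^l`, `D = x^(lm-1) y`. Its leading coefficient `A^m` and constant term
`(-B)^m - D` are coprime, so it is primitive and Gauss's lemma reduces irreducibility to the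
fraction field, where up to the unit `A^m` and the shift `z ↦ z + B/A` it becomes `z^m - γ` with
`γ = D / A^m`. If `g` is a factor of `z^m - γ` of degree `d`, the norm of a root of `g` is an
`m`-th root of `γ^d`; comparing `x`-adic valuations gives `m ∣ d (lm - 1)`, and `lm - 1` is prime
to `m`, so `d = m`.
-/

section Kummer

open Polynomial

theorem X_pow_sub_C_irreducible_of_forall_pow_eq_dvd {K : Type*} [Field K] {m : ℕ} (hm : 0 < m)
    {a : K} (ha : ∀ (d : ℕ) (u : K), u ^ m = a ^ d → m ∣ d) :
    Irreducible (X ^ m - C a) := by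
  have hne := X_pow_sub_C_ne_zero hm a
  have hnu : ¬ IsUnit (X ^ m - C a) := by
    rw [isUnit_iff_degree_eq_zero, degree_X_pow_sub_C hm, Nat.cast_eq_zero]
    exact hm.ne'
  obtain ⟨g, hg, hgdvd⟩ := WfDvdMonoid.exists_irreducible_factor hnu hne
  suffices g.natDegree = m from (associated_of_dvd_of_natDegree_le hgdvd hne
    (this.trans natDegree_X_pow_sub_C.symm).ge).irreducible hg
  -- the norm of a root `r` of `g` satisfies `N(r) ^ m = N(r ^ m) = N(a) = a ^ deg g`
  have hnorm : Algebra.norm K (AdjoinRoot.root g) ^ m = a ^ g.natDegree := by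
    have := eval₂_eq_zero_of_dvd_of_eval₂_eq_zero _ _ hgdvd (AdjoinRoot.eval₂_root g)
    rw [eval₂_sub, eval₂_pow, eval₂_C, eval₂_X, sub_eq_zero] at this
    rw [← map_pow, this, ← AdjoinRoot.algebraMap_eq, Algebra.norm_algebraMap,
      (AdjoinRoot.powerBasis hg.ne_zero).finrank, AdjoinRoot.powerBasis_dim hg.ne_zero]
  have hpos : 0 < g.natDegree := natDegree_pos_iff_degree_pos.mpr (degree_pos_of_irreducible hg)
  have hle : g.natDegree ≤ m := (natDegree_le_of_dvd hgdvd hne).trans_eq natDegree_X_pow_sub_C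
  exact hle.antisymm (Nat.le_of_dvd hpos (ha _ _ hnorm))

theorem dvd_mul_multiplicity_of_pow_eq_div_pow {R K : Type*} [CommRing R] [IsDomain R]
    [WfDvdMonoid R] [Field K] [Algebra R K] [IsFractionRing R K] {π a b : R} (hπ : Prime π)
    (ha : a ≠ 0) (hb : ¬ π ∣ b) {m d : ℕ} (hm : 0 < m) {u : K}
    (h : u ^ m = (algebraMap R K a / algebraMap R K b) ^ d) : m ∣ d * multiplicity π a := by
  obtain ⟨p, q, hq, rfl⟩ := IsFractionRing.div_surjective (A := R) u
  have hb0 : b ≠ 0 := by rintro rfl; exact hb (dvd_zero π)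
  have hq0 : q ≠ 0 := nonZeroDivisors.ne_zero hq
  have hR : p ^ m * b ^ d = a ^ d * q ^ m := by
    apply IsFractionRing.injective R K
    have hq' : algebraMap R K q ^ m ≠ 0 := pow_ne_zero _ (by simpa using hq0)
    have hb' : algebraMap R K b ^ d ≠ 0 := pow_ne_zero _ (by simpa using hb0)
    rw [div_pow, div_pow, div_eq_div_iff hq' hb'] at h
    simpa using h
  have hp0 : p ≠ 0 := by
    rintro rfl
    rw [zero_pow hm.ne', zero_mul] at hR
    exact mul_ne_zero (pow_ne_zero _ ha) (pow_ne_zero _ hq0) hR.symm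
  have hv := congrArg (emultiplicity π) hR
  simp only [emultiplicity_mul hπ, emultiplicity_pow hπ, emultiplicity_eq_zero.mpr hb,
    (FiniteMultiplicity.of_prime_left hπ hp0).emultiplicity_eq_multiplicity,
    (FiniteMultiplicity.of_prime_left hπ hq0).emultiplicity_eq_multiplicity,
    (FiniteMultiplicity.of_prime_left hπ ha).emultiplicity_eq_multiplicity, mul_zero,
    add_zero] at hv
  have hv' : m * multiplicity π p = d * multiplicity π a + m * multiplicity π q := by
    exact_mod_cast hv
  exact (Nat.dvd_add_left (dvd_mul_right m _)).mp (hv' ▸ dvd_mul_right m _)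

theorem Polynomial.isPrimitive_of_isRelPrime_coeff {R : Type*} [CommSemiring R] {p : R[X]}
    {i j : ℕ} (h : IsRelPrime (p.coeff i) (p.coeff j)) : p.IsPrimitive := fun r hr =>
  h ((C_dvd_iff_dvd_coeff r p).mp hr i) ((C_dvd_iff_dvd_coeff r p).mp hr j)

theorem irreducible_X_sub_C_pow_sub_C {K : Type*} [Field K] {m : ℕ} {β γ : K}
    (h : Irreducible (X ^ m - C γ)) : Irreducible ((X - C β) ^ m - C γ) := by
  have hshift : algEquivAevalXAddC (-β) (X ^ m - C γ) = (X - C β) ^ m - C γ := by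
    simp [algEquivAevalXAddC_apply, sub_eq_add_neg]
  rw [← hshift]
  exact (MulEquiv.irreducible_iff (algEquivAevalXAddC (-β)).toMulEquiv).mpr h

theorem irreducible_C_mul_X_sub_C_pow_sub_C {R : Type*} [CommRing R] [IsDomain R]
    [UniqueFactorizationMonoid R] {m : ℕ} (hm : 0 < m) {π A B D : R} (hπ : Prime π)
    (hA : ¬ π ∣ A) (hD : D ≠ 0) (hDm : m.Coprime (multiplicity π D))
    (hAD : IsRelPrime A ((-B) ^ m - D)) :
    Irreducible ((C A * X - C B) ^ m - C D) := by
  have hlin : (C A * X - C B).natDegree ≤ 1 := by compute_degree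
  have hprim : ((C A * X - C B) ^ m - C D).IsPrimitive := by
    refine isPrimitive_of_isRelPrime_coeff (i := m) (j := 0) ?_
    have hlead := coeff_pow_of_natDegree_le (m := m) hlin
    rw [mul_one] at hlead
    rw [coeff_sub, coeff_sub, coeff_C_of_ne_zero hm.ne', sub_zero, coeff_C_zero, hlead,
      coeff_zero_eq_eval_zero]
    simpa using hAD.pow_left
  let K := FractionRing R
  rw [hprim.irreducible_iff_irreducible_map_fraction_map (K := K)]
  have hA0 : A ≠ 0 := by rintro rfl; exact hA (dvd_zero π)
  set a := algebraMap R K A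
  have ha : a ≠ 0 := by simpa [a] using hA0
  have hmap : ((C A * X - C B) ^ m - C D).map (algebraMap R K) = C (a ^ m) *
      ((X - C (algebraMap R K B / a)) ^ m - C (algebraMap R K D / a ^ m)) := by
    simp only [Polynomial.map_sub, Polynomial.map_pow, Polynomial.map_mul, map_C, map_X]
    rw [mul_sub, ← C_mul, mul_div_cancel₀ _ (pow_ne_zero m ha), C_pow, ← mul_pow, mul_sub,
      ← C_mul, mul_div_cancel₀ _ ha]
  have hKummer : Irreducible (X ^ m - C (algebraMap R K D / a ^ m)) := by
    refine X_pow_sub_C_irreducible_of_forall_pow_eq_dvd hm fun d u hu => ?_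
    refine hDm.dvd_of_dvd_mul_right (dvd_mul_multiplicity_of_pow_eq_div_pow (u := u) hπ hD
      (b := A ^ m) (fun h => hA (hπ.dvd_of_dvd_pow h)) hm ?_)
    simpa [a] using hu
  rw [hmap]
  exact (associated_unit_mul_right _ _ (isUnit_C.mpr (pow_ne_zero m ha).isUnit)).irreducible
    (irreducible_X_sub_C_pow_sub_C hKummer)

end Kummer

open MvPolynomial

/-- The polynomial `F_{l,m} = (y^{l-1}·z − x^l)^m − x^{l·m−1}·y` in `ℂ[x,y,z]`,
with variables `x = X 0`, `y = X 1`, `z = X 2`. -/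
noncomputable def Fpoly (l m : ℕ) : MvPolynomial (Fin 3) ℂ :=
  (X 1 ^ (l - 1) * X 2 - X 0 ^ l) ^ m - X 0 ^ (l * m - 1) * X 1

namespace MvPolynomial

variable (R : Type*) [CommRing R] (n : ℕ)

noncomputable def polynomialLastEquiv :
    MvPolynomial (Fin (n + 1)) R ≃ₐ[R] Polynomial (MvPolynomial (Fin n) R) :=
  (renameEquiv R finSuccEquivLast).trans (optionEquivLeft R (Fin n))

variable {R n}

@[simp]
theorem polynomialLastEquiv_X_castSucc (i : Fin n) :
    polynomialLastEquiv R n (X i.castSucc) = Polynomial.C (X i) := by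
  simp [polynomialLastEquiv, finSuccEquivLast_castSucc, optionEquivLeft_X_some]

@[simp]
theorem polynomialLastEquiv_X_last :
    polynomialLastEquiv R n (X (Fin.last n)) = Polynomial.X := by
  simp [polynomialLastEquiv, finSuccEquivLast_last, optionEquivLeft_X_none]

end MvPolynomial

theorem polynomialLastEquiv_Fpoly (l m : ℕ) :
    polynomialLastEquiv ℂ 2 (Fpoly l m) =
      (Polynomial.C (X 1 ^ (l - 1)) * Polynomial.X - Polynomial.C (X 0 ^ l)) ^ m -
        Polynomial.C (X 0 ^ (l * m - 1) * X 1) := by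
  have hx : polynomialLastEquiv ℂ 2 (X 0) = Polynomial.C (X 0) :=
    polynomialLastEquiv_X_castSucc 0
  have hy : polynomialLastEquiv ℂ 2 (X 1) = Polynomial.C (X 1) :=
    polynomialLastEquiv_X_castSucc 1
  have hz : polynomialLastEquiv ℂ 2 (X 2) = Polynomial.X := polynomialLastEquiv_X_last
  simp only [Fpoly, map_sub, map_mul, map_pow, hx, hy, hz]

theorem MvPolynomial.multiplicity_X_pow_mul_X {σ R : Type*} [CommRing R] [IsDomain R]
    [UniqueFactorizationMonoid R] {i j : σ} (hij : i ≠ j) (n : ℕ) :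
    multiplicity (X i : MvPolynomial σ R) (X i ^ n * X j) = n := by
  have hπ : Prime (X i : MvPolynomial σ R) := X_prime
  rw [multiplicity_mul hπ, multiplicity_pow_self_of_prime hπ, multiplicity_eq_zero.mpr, add_zero]
  · simpa [X_dvd_X] using hij
  · exact FiniteMultiplicity.of_prime_left hπ
      (mul_ne_zero (pow_ne_zero _ (X_ne_zero i)) (X_ne_zero j))

theorem Nat.coprime_mul_sub_one {l m : ℕ} (h : 0 < l * m) : m.Coprime (l * m - 1) :=
  ((Nat.coprime_self_sub_right h).mpr (Nat.coprime_one_right _)).coprime_dvd_left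
    (dvd_mul_left m l)

theorem isHomogeneous_Fpoly {l m : ℕ} (hl : 0 < l) (hm : 0 < m) :
    (Fpoly l m).IsHomogeneous (l * m) := by
  have hyz : (X 1 ^ (l - 1) * X 2 : MvPolynomial (Fin 3) ℂ).IsHomogeneous l := by
    have := ((isHomogeneous_X ℂ (1 : Fin 3)).pow (l - 1)).mul (isHomogeneous_X ℂ 2)
    rwa [one_mul, Nat.sub_add_cancel hl] at this
  have hx : (X 0 ^ l : MvPolynomial (Fin 3) ℂ).IsHomogeneous l := by
    simpa using (isHomogeneous_X ℂ 0).pow l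
  have hxy : (X 0 ^ (l * m - 1) * X 1 : MvPolynomial (Fin 3) ℂ).IsHomogeneous (l * m) := by
    have := ((isHomogeneous_X ℂ (0 : Fin 3)).pow (l * m - 1)).mul (isHomogeneous_X ℂ 1)
    rwa [one_mul, Nat.sub_add_cancel (Nat.mul_pos hl hm)] at this
  exact ((hyz.sub hx).pow m).sub hxy

theorem stmt_0 (l m : ℕ) (hl : 2 ≤ l) (hm : 2 ≤ m) :
    (Fpoly l m).IsHomogeneous (l * m) ∧ Irreducible (Fpoly l m) := by
  refine ⟨isHomogeneous_Fpoly (by omega) (by omega), ?_⟩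
  rw [← MulEquiv.irreducible_iff (polynomialLastEquiv ℂ 2), polynomialLastEquiv_Fpoly]
  have hx : Prime (X 0 : MvPolynomial (Fin 2) ℂ) := X_prime
  have hy : Prime (X 1 : MvPolynomial (Fin 2) ℂ) := X_prime
  have hy_not_dvd :
      ¬ (X 1 : MvPolynomial (Fin 2) ℂ) ∣ (-X 0 ^ l) ^ m - X 0 ^ (l * m - 1) * X 1 := by
    rintro ⟨c, hc⟩
    simpa using congrArg (eval ![1, 0]) hc
  refine irreducible_C_mul_X_sub_C_pow_sub_C (by omega) hx ?_ ?_ ?_ ?_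
  · exact fun h => by simpa [X_dvd_X] using hx.dvd_of_dvd_pow h
  · exact mul_ne_zero (pow_ne_zero _ (X_ne_zero 0)) (X_ne_zero 1)
  · rw [multiplicity_X_pow_mul_X (by decide)]
    exact Nat.coprime_mul_sub_one (by positivity)
  · exact (hy.irreducible.isRelPrime_iff_not_dvd.mpr hy_not_dvd).pow_left
end

section
/- For all integers l ≥ 2 and m ≥ 2, the set of singular points of the projective plane curve C_{l,m} = {[x:y:z] ∈ ℂℙ² : (y^{l-1}·z − x^l)^m − x^{l·m−1}·y = 0} is exactly {[0:1:0], [0:0:1]}; that is, a point P of ℂℙ² satisfies F_{l,m}(P) = 0 together with (∂F_{l,m}/∂x)(P) = (∂F_{l,m}/∂y)(P) = (∂F_{l,m}/∂z)(P) = 0 (evaluated on any homogeneous representative of P) if and only if P = [0:1:0] or P = [0:0:1]. -/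
/-!
With `G = y^{l-1} z - x^l` we have `∂F/∂z = m G^{m-1} y^{l-1}`, so at a singular point `G = 0`
or `y = 0`. If `G = 0`, then `∂F/∂y` reduces to `-x^{lm-1}`, forcing `x = 0` and hence
`y^{l-1} z = 0`; if `y = 0`, then `F` reduces to `(-x^l)^m`, again forcing `x = 0`. Conversely, when
`x = 0` and `y^{l-1} z = 0` every term of `F` and of its partial derivatives carries a positive
power of `G` or of `x`.
-/

open MvPolynomial Projectivization

open scoped LinearAlgebra.Projectivization in
theorem Projectivization.eq_mk_single_iff {K ι : Type*} [Field K] [DecidableEq ι]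
    (P : ℙ K (ι → K)) (i : ι) :
    P = mk K (Pi.single i 1) (by simp) ↔ ∀ j ≠ i, P.rep j = 0 := by
  conv_lhs => rw [← P.mk_rep, mk_eq_mk_iff']
  constructor
  · rintro ⟨a, ha⟩ j hj
    simp [← ha, hj]
  · intro h
    refine ⟨P.rep i, funext fun j => ?_⟩
    by_cases hj : j = i
    · subst hj; simp
    · simp [hj, h j hj]

section Fpoly

variable (l m : ℕ) (v : Fin 3 → ℂ)

theorem eval_Fpoly :
    eval v (Fpoly l m) = (v 1 ^ (l - 1) * v 2 - v 0 ^ l) ^ m - v 0 ^ (l * m - 1) * v 1 := by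
  simp [Fpoly]

theorem eval_pderiv_zero_Fpoly :
    eval v (pderiv 0 (Fpoly l m)) =
      -(m * (v 1 ^ (l - 1) * v 2 - v 0 ^ l) ^ (m - 1) * (l * v 0 ^ (l - 1)))
        - (l * m - 1 : ℕ) * v 0 ^ (l * m - 2) * v 1 := by
  simp [Fpoly, pderiv_X, Nat.sub_sub]; ring

theorem eval_pderiv_one_Fpoly :
    eval v (pderiv 1 (Fpoly l m)) =
      m * (v 1 ^ (l - 1) * v 2 - v 0 ^ l) ^ (m - 1) * ((l - 1 : ℕ) * v 1 ^ (l - 2) * v 2)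
        - v 0 ^ (l * m - 1) := by
  simp [Fpoly, pderiv_X, Nat.sub_sub]; ring

theorem eval_pderiv_two_Fpoly :
    eval v (pderiv 2 (Fpoly l m)) =
      m * (v 1 ^ (l - 1) * v 2 - v 0 ^ l) ^ (m - 1) * v 1 ^ (l - 1) := by
  simp [Fpoly, pderiv_X]; ring

variable {l m v}

theorem Fpoly.coords_eq_zero_of_singular (hl : 2 ≤ l) (hm : 2 ≤ m)
    (hF : eval v (Fpoly l m) = 0) (hy : eval v (pderiv 1 (Fpoly l m)) = 0)
    (hz : eval v (pderiv 2 (Fpoly l m)) = 0) : v 0 = 0 ∧ (v 1 = 0 ∨ v 2 = 0) := by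
  rw [eval_Fpoly] at hF
  rw [eval_pderiv_one_Fpoly] at hy
  rw [eval_pderiv_two_Fpoly] at hz
  have hl0 : l ≠ 0 := by omega
  have hl1 : l - 1 ≠ 0 := by omega
  have hm0 : m ≠ 0 := by omega
  have hm1 : m - 1 ≠ 0 := by omega
  have hlm : l * m - 1 ≠ 0 := by have := Nat.mul_le_mul hl hm; omega
  simp only [mul_eq_zero, Nat.cast_eq_zero, hm0, false_or, pow_eq_zero_iff hl1] at hz
  rcases hz with hG | hy1
  · rw [pow_eq_zero_iff hm1] at hG
    have hx : v 0 = 0 := by simpa [hG, zero_pow hm1, hlm] using hy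
    refine ⟨hx, ?_⟩
    simpa [hx, hl0, hl1] using hG
  · have hx : v 0 = 0 := by simpa [hy1, hl0, hl1, hm0] using hF
    exact ⟨hx, .inl hy1⟩

theorem Fpoly.singular_of_coords_eq_zero (hl : 2 ≤ l) (hm : 2 ≤ m) (hx : v 0 = 0)
    (hyz : v 1 = 0 ∨ v 2 = 0) :
    eval v (Fpoly l m) = 0 ∧ eval v (pderiv 0 (Fpoly l m)) = 0 ∧
      eval v (pderiv 1 (Fpoly l m)) = 0 ∧ eval v (pderiv 2 (Fpoly l m)) = 0 := by
  have hG : v 1 ^ (l - 1) * v 2 - v 0 ^ l = 0 := by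
    rcases hyz with h | h <;>
      simp [hx, h, zero_pow (by omega : l - 1 ≠ 0), zero_pow (by omega : l ≠ 0)]
  rw [eval_Fpoly, eval_pderiv_zero_Fpoly, eval_pderiv_one_Fpoly, eval_pderiv_two_Fpoly, hG, hx]
  have hlm : 4 ≤ l * m := Nat.mul_le_mul hl hm
  simp [zero_pow (by omega : m ≠ 0), zero_pow (by omega : m - 1 ≠ 0),
    zero_pow (by omega : l * m - 1 ≠ 0), zero_pow (by omega : l * m - 2 ≠ 0)]

theorem Fpoly.singular_iff (hl : 2 ≤ l) (hm : 2 ≤ m) :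
    (eval v (Fpoly l m) = 0 ∧ eval v (pderiv 0 (Fpoly l m)) = 0 ∧
      eval v (pderiv 1 (Fpoly l m)) = 0 ∧ eval v (pderiv 2 (Fpoly l m)) = 0) ↔
      v 0 = 0 ∧ (v 1 = 0 ∨ v 2 = 0) :=
  ⟨fun ⟨hF, _, hy, hz⟩ => coords_eq_zero_of_singular hl hm hF hy hz,
    fun ⟨hx, hyz⟩ => singular_of_coords_eq_zero hl hm hx hyz⟩

end Fpoly

/-- The set of singular points of the projective plane curve `C_{l,m} = {F_{l,m} = 0}`
is exactly `{[0:1:0], [0:0:1]}`.  (Vanishing of the homogeneous polynomial `F_{l,m}` and of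
its partial derivatives at a point of `ℂℙ²` is tested on the chosen representative `P.rep`;
it is invariant under scaling of the representative.) -/
theorem stmt_1 (l m : ℕ) (hl : 2 ≤ l) (hm : 2 ≤ m) :
    {P : Projectivization ℂ (Fin 3 → ℂ) |
        eval P.rep (Fpoly l m) = 0 ∧
        eval P.rep (pderiv 0 (Fpoly l m)) = 0 ∧
        eval P.rep (pderiv 1 (Fpoly l m)) = 0 ∧
        eval P.rep (pderiv 2 (Fpoly l m)) = 0} =
      {Projectivization.mk ℂ ![0, 1, 0] (fun h => by simpa using congrFun h 1),
       Projectivization.mk ℂ ![0, 0, 1] (fun h => by simpa using congrFun h 2)} := by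
  have single_one : ![(0 : ℂ), 1, 0] = Pi.single 1 1 := by ext i; fin_cases i <;> rfl
  have single_two : ![(0 : ℂ), 0, 1] = Pi.single 2 1 := by ext i; fin_cases i <;> rfl
  ext P
  simp only [Set.mem_ofPred_eq, Set.mem_insert_iff, Set.mem_singleton_iff, single_one,
    single_two, eq_mk_single_iff, Fpoly.singular_iff hl hm]
  simp [Fin.forall_fin_succ]
  tauto
end

section
/- For all integers l ≥ 2 and m ≥ 2: (i) the dehomogenization of F_{l,m} = (y^{l-1}·z − x^l)^m − x^{l·m−1}·y at the point p = [0:1:0], namely the polynomial (z − x^l)^m − x^{l·m−1} ∈ ℂ[x,z], has multiplicity m at the origin (its homogeneous component of degree n is zero for all n < m and its homogeneous component of degree m is nonzero); (ii) the dehomogenization at q = [0:0:1], namely (y^{l-1} − x^l)^m − x^{l·m−1}·y ∈ ℂ[x,y], has multiplicity (l−1)·m at the origin. -/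
open MvPolynomial

/-- `(z − x^l)^m − x^{l·m−1}`, the dehomogenization of `F_{l,m}` at `[0:1:0]`,
as a polynomial in `ℂ[x,z]` with `x = X 0`, `z = X 1`. -/
noncomputable def Fdehom_p (l m : ℕ) : MvPolynomial (Fin 2) ℂ :=
  (X 1 - X 0 ^ l) ^ m - X 0 ^ (l * m - 1)

/-- `(y^{l-1} − x^l)^m − x^{l·m−1}·y`, the dehomogenization of `F_{l,m}` at `[0:0:1]`,
as a polynomial in `ℂ[x,y]` with `x = X 0`, `y = X 1`. -/
noncomputable def Fdehom_q (l m : ℕ) : MvPolynomial (Fin 2) ℂ :=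
  (X 1 ^ (l - 1) - X 0 ^ l) ^ m - X 0 ^ (l * m - 1) * X 1

/-!
Both dehomogenizations have the shape `(P - Q)^m - S` with `P`, `Q`, `S` homogeneous of degrees
`a < b` and `d > a·m`. In the binomial expansion of `(P - Q)^m` the term `P^k (-Q)^(m-k)` is
homogeneous of degree `a·k + b·(m-k)`, which exceeds `a·m` unless `k = m`; so `P^m` is the
lowest nonzero homogeneous component, and `S` lies too high to interfere.
-/

namespace MvPolynomial

variable {σ R : Type*} [CommRing R]

def HasMultiplicityAtZero (d : ℕ) (p : MvPolynomial σ R) : Prop :=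
  (∀ n < d, homogeneousComponent n p = 0) ∧ homogeneousComponent d p ≠ 0

theorem homogeneousComponent_sub_pow_of_lt {P Q : MvPolynomial σ R} {a b : ℕ}
    (hP : P.IsHomogeneous a) (hQ : Q.IsHomogeneous b) (hab : a < b) (m : ℕ) {n : ℕ}
    (hn : n ≤ a * m) :
    homogeneousComponent n ((P - Q) ^ m) = if n = a * m then P ^ m else 0 := by
  have hterm : ∀ k, (P ^ k * (-Q) ^ (m - k) * (m.choose k : MvPolynomial σ R)).IsHomogeneous
      (a * k + b * (m - k) + 0) := fun k =>
    ((hP.pow k).mul (hQ.neg.pow (m - k))).mul (by simpa using isHomogeneous_C σ (m.choose k : R))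
  rw [sub_eq_add_neg, add_pow, map_sum, Finset.sum_eq_single m]
  · rw [homogeneousComponent_of_mem (hterm m)]
    simp
  · intro k hk hne
    have hkm : k < m := lt_of_le_of_ne (Finset.mem_range_succ_iff.mp hk) hne
    have hsplit : a * m = a * k + a * (m - k) := by rw [← mul_add, Nat.add_sub_cancel' hkm.le]
    have hlt : a * (m - k) < b * (m - k) := Nat.mul_lt_mul_of_pos_right hab (by omega)
    rw [homogeneousComponent_of_mem (hterm k), if_neg (by omega)]
  · exact fun h => absurd (Finset.self_mem_range_succ m) h

theorem hasMultiplicityAtZero_sub_pow_sub {P Q S : MvPolynomial σ R} {a b d m : ℕ}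
    (hP : P.IsHomogeneous a) (hQ : Q.IsHomogeneous b) (hS : S.IsHomogeneous d) (hab : a < b)
    (hd : a * m < d) (hPm : P ^ m ≠ 0) :
    HasMultiplicityAtZero (a * m) ((P - Q) ^ m - S) := by
  have hlow : ∀ n ≤ a * m,
      homogeneousComponent n ((P - Q) ^ m - S) = if n = a * m then P ^ m else 0 := by
    intro n hn
    rw [map_sub, homogeneousComponent_sub_pow_of_lt hP hQ hab m hn,
      homogeneousComponent_of_mem hS, if_neg (show n ≠ d by omega), sub_zero]
  exact ⟨fun n hn => by rw [hlow n hn.le, if_neg hn.ne], by rwa [hlow _ le_rfl, if_pos rfl]⟩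

end MvPolynomial

theorem stmt_2 (l m : ℕ) (hl : 2 ≤ l) (hm : 2 ≤ m) :
    ((∀ n < m, homogeneousComponent n (Fdehom_p l m) = 0) ∧
      homogeneousComponent m (Fdehom_p l m) ≠ 0) ∧
    ((∀ n < (l - 1) * m, homogeneousComponent n (Fdehom_q l m) = 0) ∧
      homogeneousComponent ((l - 1) * m) (Fdehom_q l m) ≠ 0) := by
  have hlm : 2 * m ≤ l * m := Nat.mul_le_mul_right m hl
  have hsub : (l - 1) * m = l * m - m := Nat.sub_one_mul l m
  constructor
  · have h : HasMultiplicityAtZero (1 * m) (Fdehom_p l m) :=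
      hasMultiplicityAtZero_sub_pow_sub (isHomogeneous_X ℂ 1) (isHomogeneous_X_pow 0 l)
        (isHomogeneous_X_pow 0 (l * m - 1)) (by omega) (by omega) (pow_ne_zero _ (X_ne_zero _))
    rw [one_mul] at h
    exact h
  · exact (hasMultiplicityAtZero_sub_pow_sub (isHomogeneous_X_pow 1 (l - 1))
      (isHomogeneous_X_pow 0 l) ((isHomogeneous_X_pow 0 (l * m - 1)).mul (isHomogeneous_X ℂ 1))
      (by omega) (by omega) (pow_ne_zero _ (pow_ne_zero _ (X_ne_zero _))) :
      HasMultiplicityAtZero ((l - 1) * m) (Fdehom_q l m))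
end

section
/- The two conics C₁ = {[x:y:z] ∈ ℂℙ² : x² + y² − y·z = 0} and C₂ = {[x:y:z] ∈ ℂℙ² : x² − y² − y·z = 0} have exactly one common point: C₁ ∩ C₂ = {[0:0:1]}. -/
/-! Subtracting the two equations gives `2y² = 0`, so `y = 0` and then `x² = 0`: every common
zero is a multiple of `(0, 0, 1)`. -/

open MvPolynomial Projectivization

theorem Projectivization.eq_mk_iff_exists_smul_eq_rep {K V : Type*} [DivisionRing K]
    [AddCommGroup V] [Module K V] (P : Projectivization K V) (w : V) (hw : w ≠ 0) :
    P = mk K w hw ↔ ∃ a : K, a • w = P.rep := by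
  conv_lhs => rw [← P.mk_rep]
  exact mk_eq_mk_iff' K _ _ _ _

theorem Pi.exists_smul_single_one_eq_iff {ι R : Type*} [DecidableEq ι] [MulZeroOneClass R]
    (i : ι) (v : ι → R) : (∃ a : R, a • Pi.single i 1 = v) ↔ ∀ j ≠ i, v j = 0 := by
  constructor
  · rintro ⟨a, rfl⟩ j hj
    simp [hj]
  · intro hv
    refine ⟨v i, funext fun j => ?_⟩
    by_cases hj : j = i
    · subst hj; simp
    · simp [hj, hv j hj]

theorem sq_add_sq_sub_mul_eq_zero_and_sq_sub_sq_sub_mul_eq_zero_iff {R : Type*} [CommRing R]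
    [NoZeroDivisors R] (h2 : (2 : R) ≠ 0) (x y z : R) :
    (x ^ 2 + y ^ 2 - y * z = 0 ∧ x ^ 2 - y ^ 2 - y * z = 0) ↔ x = 0 ∧ y = 0 := by
  constructor
  · rintro ⟨h₁, h₂⟩
    have hy : y = 0 := by
      have : 2 * y ^ 2 = 0 := by linear_combination h₁ - h₂
      exact pow_eq_zero_iff two_ne_zero |>.1 <| (mul_eq_zero.1 this).resolve_left h2
    have hx : x ^ 2 = 0 := by linear_combination h₁ - (y - z) * hy
    exact ⟨pow_eq_zero_iff two_ne_zero |>.1 hx, hy⟩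
  · rintro ⟨rfl, rfl⟩
    constructor <;> ring

/-- The two conics `C₁ = {x² + y² − y·z = 0}` and `C₂ = {x² − y² − y·z = 0}` in `ℂℙ²`
meet in exactly one point, `[0:0:1]`.  (A point of the projectivization of `ℂ³` lies on the
zero set of a homogeneous polynomial iff the polynomial vanishes on its representative
`P.rep`; this is invariant under scaling of the representative.) -/
theorem stmt_8 :
    {P : Projectivization ℂ (Fin 3 → ℂ) |
        eval P.rep (X 0 ^ 2 + X 1 ^ 2 - X 1 * X 2 : MvPolynomial (Fin 3) ℂ) = 0} ∩
    {P : Projectivization ℂ (Fin 3 → ℂ) |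
        eval P.rep (X 0 ^ 2 - X 1 ^ 2 - X 1 * X 2 : MvPolynomial (Fin 3) ℂ) = 0} =
      {Projectivization.mk ℂ ![0, 0, 1] (fun h => by simpa using congrFun h 2)} := by
  have e₂ : (![0, 0, 1] : Fin 3 → ℂ) = Pi.single 2 1 := by
    ext i; fin_cases i <;> rfl
  ext P
  simp only [Set.mem_inter_iff, Set.mem_ofPred_eq, Set.mem_singleton_iff, map_add, map_sub,
    map_mul, map_pow, eval_X]
  rw [sq_add_sq_sub_mul_eq_zero_and_sq_sub_sq_sub_mul_eq_zero_iff two_ne_zero,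
    eq_mk_iff_exists_smul_eq_rep, e₂, Pi.exists_smul_single_one_eq_iff]
  simp [Fin.forall_fin_succ]
end

section
/- The two conics C₁ = {[x:y:z] ∈ ℂℙ² : x² + y² + x·y − y·z = 0} and C₂ = {[x:y:z] ∈ ℂℙ² : x² + y² − x·y − y·z = 0} have exactly two common points: C₁ ∩ C₂ = {[0:0:1], [0:1:1]}. -/
open MvPolynomial Projectivization

/-! The difference of the two quadratic forms is `2xy`, so a common zero has `x = 0` (if `y = 0`
the first form reduces to `x²`). On the line `x = 0` the first form is `y (y - z)`, leaving the
lines through `(0,0,1)` and `(0,1,1)`. -/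

theorem Projectivization.eq_mk_iff_exists_smul_eq {K V : Type*} [DivisionRing K] [AddCommGroup V]
    [Module K V] (P : Projectivization K V) {w : V} (hw : w ≠ 0) :
    P = mk K w hw ↔ ∃ a : K, a • w = P.rep := by
  conv_lhs => rw [← P.mk_rep]
  exact mk_eq_mk_iff' K _ _ P.rep_nonzero hw

section

variable {K : Type*} [Field K]

theorem conics_common_zero_iff [NeZero (2 : K)] (x y z : K) :
    (x ^ 2 + y ^ 2 + x * y - y * z = 0 ∧ x ^ 2 + y ^ 2 - x * y - y * z = 0) ↔
      x = 0 ∧ (y = 0 ∨ y = z) := by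
  constructor
  · rintro ⟨h₁, h₂⟩
    have hxy : x * y = 0 :=
      (mul_eq_zero.mp (by linear_combination h₁ - h₂ : 2 * (x * y) = 0)).resolve_left two_ne_zero
    have hx : x = 0 := by
      rcases mul_eq_zero.mp hxy with hx | hy
      · exact hx
      · exact pow_eq_zero_iff two_ne_zero |>.mp (by linear_combination h₁ - (y + x - z) * hy)
    have hyz : y * (y - z) = 0 := by linear_combination h₁ - (x + y) * hx
    exact ⟨hx, (mul_eq_zero.mp hyz).imp_right sub_eq_zero.mp⟩
  · rintro ⟨rfl, rfl | rfl⟩ <;> constructor <;> ring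

theorem eq_zero_and_or_iff_exists_smul_eq (v : Fin 3 → K) :
    v 0 = 0 ∧ (v 1 = 0 ∨ v 1 = v 2) ↔
      (∃ a : K, a • ![0, 0, 1] = v) ∨ ∃ a : K, a • ![0, 1, 1] = v := by
  constructor
  · rintro ⟨h₀, h₁ | h₁⟩
    · exact .inl ⟨v 2, by ext i; fin_cases i <;> simp [h₀, h₁]⟩
    · exact .inr ⟨v 1, by ext i; fin_cases i <;> simp [h₀, h₁]⟩
  · rintro (⟨a, rfl⟩ | ⟨a, rfl⟩) <;> simp

end

/-- The two conics `C₁ = {x² + y² + x·y − y·z = 0}` and `C₂ = {x² + y² − x·y − y·z = 0}`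
in `ℂℙ²` have exactly two common points: `[0:0:1]` and `[0:1:1]`. -/
theorem stmt_10 :
    {P : Projectivization ℂ (Fin 3 → ℂ) |
        eval P.rep (X 0 ^ 2 + X 1 ^ 2 + X 0 * X 1 - X 1 * X 2 : MvPolynomial (Fin 3) ℂ) = 0} ∩
    {P : Projectivization ℂ (Fin 3 → ℂ) |
        eval P.rep (X 0 ^ 2 + X 1 ^ 2 - X 0 * X 1 - X 1 * X 2 : MvPolynomial (Fin 3) ℂ) = 0} =
      {Projectivization.mk ℂ ![0, 0, 1] (fun h => by simpa using congrFun h 2),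
       Projectivization.mk ℂ ![0, 1, 1] (fun h => by simpa using congrFun h 1)} := by
  ext P
  simp only [Set.mem_inter_iff, Set.mem_ofPred_eq, Set.mem_insert_iff, Set.mem_singleton_iff,
    eq_mk_iff_exists_smul_eq, map_add, map_sub, map_mul, map_pow, eval_X]
  rw [conics_common_zero_iff, eq_zero_and_or_iff_exists_smul_eq]
end
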